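/- There is no s ∈ [0,1) such that p_𝒞(Φ_T(f), Φ_T(g)) ≤ s·p_𝒞(f,g) for all f, g ∈ 𝒞_{b,c}. That is, the Divide and Conquer functional Φ_T is never a contraction with respect to the partial metric p_𝒞 on 𝒞_{b,c}. -/

import Mathlib

open scoped NNReal ENNReal

/-- `ω_b = {bᵏ : k ∈ ℕ₊}`. -/
def omegaB (b : ℕ) : Set ℕ := {n | ∃ k : ℕ, 1 ≤ k ∧ n = b ^ k}

/-- Membership in `𝒞_{b,c}` (functions indexed from `1`; the value at `0` is irrelevant
and normalized to `⊤`): `f ∈ 𝒞`, `f(1) = c` and `f(n) = ∞` for `n ∉ ω_b`, `n > 1`. -/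
def memCbc (b : ℕ) (c : ℝ≥0∞) (f : ℕ → ℝ≥0∞) : Prop :=
  (∀ n, 1 ≤ n → 0 < f n) ∧
    (∑' n : ℕ, (2 : ℝ≥0∞)⁻¹ ^ (n + 1) * (f (n + 1))⁻¹) ≠ ⊤ ∧
    f 1 = c ∧ (∀ n, 2 ≤ n → n ∉ omegaB b → f n = ⊤)

/-- `p_𝒞(f,g) = Σ_{n=1}^∞ 2^{-n} max(1/f(n), 1/g(n))`. -/
noncomputable def pC (f g : ℕ → ℝ≥0∞) : ℝ≥0∞ :=
  ∑' n : ℕ, (2 : ℝ≥0∞)⁻¹ ^ (n + 1) * max (f (n + 1))⁻¹ (g (n + 1))⁻¹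

open Classical in
/-- The Divide and Conquer functional `Φ_T`. -/
noncomputable def PhiT (a b : ℕ) (c : ℝ≥0∞) (h : ℕ → ℝ≥0∞) (f : ℕ → ℝ≥0∞) :
    ℕ → ℝ≥0∞ := fun n =>
  if n = 1 then c else if n ∈ omegaB b then (a : ℝ≥0∞) * f (n / b) + h n else ⊤

/-!
Every `Φ_T(f)` takes the prescribed value `c` at `1`, so the first summand of
`p_𝒞(Φ_T(f), Φ_T(g))` is always `2⁻¹ c⁻¹`. The function equal to `c` at `1` and to `∞`
elsewhere lies in `𝒞_{b,c}` and has self-distance exactly `2⁻¹ c⁻¹`, so no factor `s < 1`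
can work for it.
-/

lemma inv_two_mul_max_inv_le_pC (f g : ℕ → ℝ≥0∞) :
    2⁻¹ * max (f 1)⁻¹ (g 1)⁻¹ ≤ pC f g := by
  simpa [pC] using ENNReal.le_tsum (f := fun n : ℕ =>
    (2 : ℝ≥0∞)⁻¹ ^ (n + 1) * max (f (n + 1))⁻¹ (g (n + 1))⁻¹) 0

lemma PhiT_apply_one (a b : ℕ) (c : ℝ≥0∞) (h f : ℕ → ℝ≥0∞) : PhiT a b c h f 1 = c := by
  simp [PhiT]

lemma inv_two_mul_inv_le_pC_PhiT (a b : ℕ) (c : ℝ≥0∞) (h f g : ℕ → ℝ≥0∞) :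
    2⁻¹ * c⁻¹ ≤ pC (PhiT a b c h f) (PhiT a b c h g) := by
  simpa [PhiT_apply_one] using inv_two_mul_max_inv_le_pC (PhiT a b c h f) (PhiT a b c h g)

lemma tsum_inv_update_top_one (x : ℝ≥0∞) :
    ∑' n : ℕ, (2 : ℝ≥0∞)⁻¹ ^ (n + 1) * (Function.update (⊤ : ℕ → ℝ≥0∞) 1 x (n + 1))⁻¹
      = 2⁻¹ * x⁻¹ := by
  rw [tsum_eq_single 0 fun n hn => by simp [hn]]
  simp

lemma inv_two_mul_inv_ne_top {x : ℝ≥0∞} (hx : x ≠ 0) : 2⁻¹ * x⁻¹ ≠ ⊤ :=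
  ENNReal.mul_ne_top (by simp) (ENNReal.inv_ne_top.2 hx)

lemma pC_update_top_one_self (x : ℝ≥0∞) :
    pC (Function.update ⊤ 1 x) (Function.update ⊤ 1 x) = 2⁻¹ * x⁻¹ := by
  simp only [pC, max_self, tsum_inv_update_top_one]

lemma memCbc_update_top_one (b : ℕ) {c : ℝ≥0∞} (hc : c ≠ 0) :
    memCbc b c (Function.update ⊤ 1 c) := by
  refine ⟨fun n _ => ?_, ?_, by simp, fun n hn _ => ?_⟩
  · by_cases hn1 : n = 1
    · simpa [hn1] using pos_iff_ne_zero.mpr hc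
    · simp [hn1]
  · simpa only [tsum_inv_update_top_one] using inv_two_mul_inv_ne_top hc
  · simp [show n ≠ 1 by omega]

theorem baire_stmt7_general (a b : ℕ)
    (c : ℝ≥0) (hc : 0 < c)
    (h : ℕ → ℝ≥0∞) :
    ¬ ∃ s : ℝ≥0, s < 1 ∧
      ∀ f g : ℕ → ℝ≥0∞, memCbc b (c : ℝ≥0∞) f → memCbc b (c : ℝ≥0∞) g →
        pC (PhiT a b (c : ℝ≥0∞) h f) (PhiT a b (c : ℝ≥0∞) h g) ≤ (s : ℝ≥0∞) * pC f g := by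
  rintro ⟨s, hs, hcontr⟩
  have hc' : (c : ℝ≥0∞) ≠ 0 := by exact_mod_cast hc.ne'
  set f : ℕ → ℝ≥0∞ := Function.update ⊤ 1 (c : ℝ≥0∞)
  have hf : memCbc b c f := memCbc_update_top_one b hc'
  set K : ℝ≥0∞ := 2⁻¹ * (c : ℝ≥0∞)⁻¹
  have hle : K ≤ s * K :=
    calc K ≤ pC (PhiT a b c h f) (PhiT a b c h f) := inv_two_mul_inv_le_pC_PhiT a b c h f f
      _ ≤ s * pC f f := hcontr f f hf hf
      _ = s * K := by rw [pC_update_top_one_self]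
  have hlt : s * K < K := by
    simpa using ENNReal.mul_lt_mul_left (by simp) (inv_two_mul_inv_ne_top hc')
      (ENNReal.coe_lt_one_iff.2 hs)
  exact hle.not_gt hlt

/-- there is no `s ∈ [0,1)` such that
`p_𝒞(Φ_T(f), Φ_T(g)) ≤ s·p_𝒞(f,g)` for all `f, g ∈ 𝒞_{b,c}`. -/
theorem baire_stmt7 (a b : ℕ) (ha : 1 < a) (hb : 1 < b)
    (c : ℝ≥0) (hc : 0 < c)
    (h : ℕ → ℝ≥0∞) (hh : ∀ n, 1 ≤ n → 0 < h n ∧ h n ≠ ⊤) :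
    ¬ ∃ s : ℝ≥0, s < 1 ∧
      ∀ f g : ℕ → ℝ≥0∞, memCbc b (c : ℝ≥0∞) f → memCbc b (c : ℝ≥0∞) g →
        pC (PhiT a b (c : ℝ≥0∞) h f) (PhiT a b (c : ℝ≥0∞) h g) ≤ (s : ℝ≥0∞) * pC f g :=
  baire_stmt7_general a b c hc h
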